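/- Let X be an α-hyperbolic geodesic metric space, (a,b,c) a geodesic triangle, and p' the point of [b,c] nearest to a. If p' = b, then the distance from b to the side [a,c] is at most 2α. Conversely, if the distance from b to [a,c] is at most 2α, then d(p', b) ≤ 3α. -/

import Mathlib

/-- `s` is (the image of) a geodesic segment from `a` to `b`. -/
def IsGeodesicSegment {X : Type*} [MetricSpace X] (a b : X) (s : Set X) : Prop :=
  ∃ f : ℝ → X, f 0 = a ∧ f (dist a b) = b ∧
    (∀ u ∈ Set.Icc (0:ℝ) (dist a b), ∀ v ∈ Set.Icc (0:ℝ) (dist a b),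
      dist (f u) (f v) = |u - v|) ∧
    s = f '' Set.Icc (0:ℝ) (dist a b)

/-- `X` is a geodesic metric space. -/
def GeodesicSpace (X : Type*) [MetricSpace X] : Prop :=
  ∀ a b : X, ∃ s : Set X, IsGeodesicSegment a b s

/-- The inscribed-triangle form of Gromov hyperbolicity with constant `α`:
every geodesic triangle `(a,b,c)` admits an inscribed triangle `(p,q,r)` with
`p ∈ [bc]`, `q ∈ [ac]`, `r ∈ [ab]`, equal tangency distances, diameter at most `α`,
and each inscribed vertex lies within `α` of the metric projection of the
opposite vertex of the triangle onto the corresponding side. -/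
def GromovHyperbolicWith (α : ℝ) (X : Type*) [MetricSpace X] : Prop :=
  ∀ a b c : X, ∀ sab sbc sac : Set X,
    IsGeodesicSegment a b sab → IsGeodesicSegment b c sbc → IsGeodesicSegment a c sac →
    ∃ p ∈ sbc, ∃ q ∈ sac, ∃ r ∈ sab,
      dist a r = dist a q ∧ dist b p = dist b r ∧ dist c p = dist c q ∧
      dist p q ≤ α ∧ dist q r ≤ α ∧ dist p r ≤ α ∧
      (∀ p' ∈ sbc, dist a p' = Metric.infDist a sbc → dist p p' ≤ α) ∧
      (∀ q' ∈ sac, dist b q' = Metric.infDist b sac → dist q q' ≤ α) ∧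
      (∀ r' ∈ sab, dist c r' = Metric.infDist c sab → dist r r' ≤ α)

/-!
The inscribed vertex `p ∈ [b,c]` of the triangle sits at distance `(a|c)_b` from `b`, and
`(a|c)_b ≤ d(b, [a,c])` by the triangle inequality. Since `p` is `α`-close to the projection
`p'`, both implications follow from the triangle inequality through `p`: if `p' = b` then
`d(b, [a,c]) ≤ d(b,p) + d(p,q) ≤ 2α`, and conversely `d(p',b) ≤ d(p',p) + (a|c)_b ≤ α + 2α`.
-/

open Metric

/-- `gromovProduct x y z` is `(y|z)_x`, based at `x`. -/
noncomputable def gromovProduct {X : Type*} [MetricSpace X] (x y z : X) : ℝ :=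
  (dist x y + dist x z - dist y z) / 2

namespace IsGeodesicSegment

variable {X : Type*} [MetricSpace X] {a b : X} {s : Set X}

lemma left_mem (h : IsGeodesicSegment a b s) : a ∈ s := by
  obtain ⟨f, hf0, -, -, rfl⟩ := h
  exact ⟨0, ⟨le_rfl, dist_nonneg⟩, hf0⟩

lemma dist_add_dist_of_mem (h : IsGeodesicSegment a b s) {x : X} (hx : x ∈ s) :
    dist a x + dist x b = dist a b := by
  obtain ⟨f, hf0, hfd, hiso, rfl⟩ := h
  obtain ⟨u, hu, rfl⟩ := hx
  have hleft : dist a (f u) = u := by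
    rw [← hf0, hiso 0 ⟨le_rfl, dist_nonneg⟩ u hu, zero_sub, abs_neg, abs_of_nonneg hu.1]
  have hright : dist (f u) b = dist a b - u := by
    rw [← hfd, hiso u hu _ ⟨dist_nonneg, le_rfl⟩, hfd, abs_sub_comm,
      abs_of_nonneg (sub_nonneg.2 hu.2)]
  rw [hleft, hright, add_sub_cancel]

lemma gromovProduct_le_infDist (h : IsGeodesicSegment a b s) (x : X) :
    gromovProduct x a b ≤ infDist x s := by
  refine (le_infDist ⟨a, h.left_mem⟩).2 fun y hy => ?_
  have hy := h.dist_add_dist_of_mem hy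
  have hxa := dist_triangle x y a
  have hxb := dist_triangle x y b
  rw [dist_comm y a] at hxa
  unfold gromovProduct
  linarith

end IsGeodesicSegment

lemma dist_eq_gromovProduct_of_tangency {X : Type*} [MetricSpace X] {a b c p q r : X}
    {sab sbc sac : Set X} (hab : IsGeodesicSegment a b sab) (hbc : IsGeodesicSegment b c sbc)
    (hac : IsGeodesicSegment a c sac) (hp : p ∈ sbc) (hq : q ∈ sac) (hr : r ∈ sab)
    (har : dist a r = dist a q) (hbp : dist b p = dist b r) (hcp : dist c p = dist c q) :
    dist b p = gromovProduct b a c := by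
  have hr' := hab.dist_add_dist_of_mem hr
  have hp' := hbc.dist_add_dist_of_mem hp
  have hq' := hac.dist_add_dist_of_mem hq
  rw [dist_comm r b] at hr'
  rw [dist_comm p c] at hp'
  rw [dist_comm q c] at hq'
  unfold gromovProduct
  rw [dist_comm b a]
  linarith

theorem shadow_lemma_stmt2_general {X : Type*} [MetricSpace X] (α : ℝ)
    (hgeo : GeodesicSpace X) (hhyp : GromovHyperbolicWith α X)
    (a b c : X) (sbc sac : Set X)
    (hbc : IsGeodesicSegment b c sbc) (hac : IsGeodesicSegment a c sac)
    (p' : X) (hp'mem : p' ∈ sbc) (hp'proj : dist a p' = Metric.infDist a sbc) :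
    (p' = b → Metric.infDist b sac ≤ 2 * α) ∧
    (Metric.infDist b sac ≤ 2 * α → dist p' b ≤ 3 * α) := by
  obtain ⟨sab, hab⟩ := hgeo a b
  obtain ⟨p, hp, q, hq, r, hr, har, hbp, hcp, hpq, -, -, hproj, -, -⟩ :=
    hhyp a b c sab sbc sac hab hbc hac
  have hpp' : dist p p' ≤ α := hproj p' hp'mem hp'proj
  constructor
  · rintro rfl
    calc infDist p' sac ≤ dist p' q := infDist_le_dist_of_mem hq
      _ ≤ dist p' p + dist p q := dist_triangle p' p q
      _ ≤ 2 * α := by rw [dist_comm]; linarith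
  · intro hinf
    have hbp_le : dist b p ≤ infDist b sac :=
      (dist_eq_gromovProduct_of_tangency hab hbc hac hp hq hr har hbp hcp).trans_le
        (hac.gromovProduct_le_infDist b)
    calc dist p' b ≤ dist p' p + dist p b := dist_triangle p' p b
      _ ≤ 3 * α := by rw [dist_comm p' p, dist_comm p b]; linarith

/-- Let `p'` be the metric projection of `a` onto the side `[b,c]`.
If `p' = b` then the distance from `b` to `[a,c]` is at most `2α`; conversely, if
the distance from `b` to `[a,c]` is at most `2α`, then `d(p', b) ≤ 3α`. -/
theorem shadow_lemma_stmt2 {X : Type*} [MetricSpace X] (α : ℝ) (hα : 0 ≤ α)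
    (hgeo : GeodesicSpace X) (hhyp : GromovHyperbolicWith α X)
    (a b c : X) (sbc sac : Set X)
    (hbc : IsGeodesicSegment b c sbc) (hac : IsGeodesicSegment a c sac)
    (p' : X) (hp'mem : p' ∈ sbc) (hp'proj : dist a p' = Metric.infDist a sbc) :
    (p' = b → Metric.infDist b sac ≤ 2 * α) ∧
    (Metric.infDist b sac ≤ 2 * α → dist p' b ≤ 3 * α) :=
  shadow_lemma_stmt2_general α hgeo hhyp a b c sbc sac hbc hac p' hp'mem hp'proj
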